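/- If (X, X₀) is a 2-contact space and X₀ is extremally disconnected, then X is C-semiregular. -/

import Mathlib

open TopologicalSpace

/-- A set is regular closed if it equals the closure of its interior. -/
def IsRC {X : Type*} [TopologicalSpace X] (F : Set X) : Prop :=
  F = closure (interior F)

/-- The relation `C#` associated to a precontact relation `C`. -/
def CSharp {B : Type*} [BooleanAlgebra B] (C : B → B → Prop) (a b : B) : Prop :=
  C a b ∨ C b a ∨ a ⊓ b ≠ ⊥

/-- A clan of a precontact algebra `(B,C)`. -/
def IsClan {B : Type*} [BooleanAlgebra B] (C : B → B → Prop) (Γ : Set B) : Prop :=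
  Γ.Nonempty ∧ ⊥ ∉ Γ ∧ (∀ a ∈ Γ, ∀ b : B, a ≤ b → b ∈ Γ) ∧
    (∀ a b : B, a ⊔ b ∈ Γ → a ∈ Γ ∨ b ∈ Γ) ∧
    (∀ a ∈ Γ, ∀ b ∈ Γ, CSharp C a b)

/-- For a clopen subset `A` of the subspace `X₀`, its closure `cl_X A` in the ambient space. -/
def embCl {X : Type*} [TopologicalSpace X] (X₀ : Set X) (A : Clopens ↥X₀) : Set X :=
  closure (Subtype.val '' (A : Set ↥X₀))

/-- A 2-contact space `(X, X₀)`. -/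
structure TwoContact (X : Type*) [TopologicalSpace X] (X₀ : Set X) : Prop where
  /-- `X₀` is dense in `X` -/
  dense : Dense X₀
  /-- (CS1): `X` is a `T₀`-space -/
  t0 : T0Space X
  /-- (CS2): `X₀` is compact -/
  compact₀ : CompactSpace ↥X₀
  /-- (CS2): `X₀` is Hausdorff -/
  t2₀ : T2Space ↥X₀
  /-- (CS2): `X₀` is zero-dimensional -/
  zdim₀ : IsTopologicalBasis {s : Set ↥X₀ | IsClopen s}
  /-- (CS3): `RC(X,X₀)` is a closed base for `X` -/
  base : ∀ U : Set X, IsOpen U → ∀ x ∈ U,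
    ∃ A : Clopens ↥X₀, x ∈ (embCl X₀ A)ᶜ ∧ (embCl X₀ A)ᶜ ⊆ U
  /-- (CS4): every clan of `(CO(X₀), δ_(X,X₀))` is of the form `Γ_{x,X₀}` -/
  cs4 : ∀ Γ : Set (Clopens ↥X₀),
    IsClan (fun A B : Clopens ↥X₀ => (embCl X₀ A ∩ embCl X₀ B).Nonempty) Γ →
    ∃ x : X, Γ = {A : Clopens ↥X₀ | x ∈ embCl X₀ A}

/-- A clan of the standard contact algebra `(RC(X), C_X)`. -/
def IsClanRC {X : Type*} [TopologicalSpace X] (Γ : Set (Set X)) : Prop :=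
  (∀ F ∈ Γ, IsRC F) ∧ Γ.Nonempty ∧ ∅ ∉ Γ ∧
    (∀ F ∈ Γ, ∀ G : Set X, IsRC G → F ⊆ G → G ∈ Γ) ∧
    (∀ F G : Set X, IsRC F → IsRC G → F ∪ G ∈ Γ → F ∈ Γ ∨ G ∈ Γ) ∧
    (∀ F ∈ Γ, ∀ G ∈ Γ, (F ∩ G).Nonempty)

/-- A space is semiregular if its regular closed sets form a closed base. -/
def Semiregular (X : Type*) [TopologicalSpace X] : Prop :=
  ∀ U : Set X, IsOpen U → ∀ x ∈ U, ∃ F : Set X, IsRC F ∧ x ∉ F ∧ Fᶜ ⊆ U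

/-- A C-semiregular space. -/
def CSemiregular (X : Type*) [TopologicalSpace X] : Prop :=
  Semiregular X ∧ T0Space X ∧
    ∀ Γ : Set (Set X), IsClanRC Γ → ∃ x : X, Γ = {F : Set X | IsRC F ∧ x ∈ F}

/-- An u-point of a topological space. -/
def IsUPoint {X : Type*} [TopologicalSpace X] (x : X) : Prop :=
  ∀ U V : Set X, IsOpen U → IsOpen V →
    x ∈ closure U ∩ closure V → x ∈ closure (U ∩ V)

open Set

/-
If `X₀` is extremally disconnected, then `A ↦ cl_X A` maps `CO(X₀)` onto `RC(X)`: a regular closed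
`F` is `cl_X` of the clopen set `cl_{X₀}(X₀ ∩ int F)`. Since this map preserves joins, `⊥` and `⊤`
and turns `δ_{(X,X₀)}` into `C_X`, a clan `Γ` of `RC(X)` pulls back to a clan of `CO(X₀)`, which by
(CS4) is `Γ_{x,X₀}` for some `x`; pushing forward again gives `Γ = σ_x`. Semiregularity is (CS3).
-/

section RegularClosed

variable {X : Type*} [TopologicalSpace X]

lemma IsOpen.isRC_closure {U : Set X} (hU : IsOpen U) : IsRC (closure U) :=
  (closure_mono hU.subset_interior_closure).antisymm isClosed_closure.closure_interior_subset

lemma isRC_univ : IsRC (univ : Set X) := by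
  simpa using (isOpen_univ (X := X)).isRC_closure

lemma Dense.closure_inter_of_isOpen {X₀ U : Set X} (hd : Dense X₀) (hU : IsOpen U) :
    closure (U ∩ X₀) = closure U :=
  (closure_mono inter_subset_left).antisymm
    (closure_minimal (hd.open_subset_closure_inter hU) isClosed_closure)

end RegularClosed

section EmbCl

variable {X : Type*} [TopologicalSpace X] {X₀ : Set X}

lemma embCl_eq_closure (hd : Dense X₀) {U : Set X} (hU : IsOpen U) {A : Clopens X₀}
    (hA : (A : Set X₀) = closure (Subtype.val ⁻¹' U)) : embCl X₀ A = closure U := by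
  have hcl : closure (Subtype.val '' (A : Set X₀)) =
      closure (Subtype.val '' (Subtype.val ⁻¹' U)) :=
    subset_antisymm
      (closure_minimal (hA ▸ image_closure_subset_closure_image continuous_subtype_val)
        isClosed_closure)
      (closure_mono (image_mono (hA ▸ subset_closure)))
  rw [embCl, hcl, Subtype.image_preimage_val, inter_comm, hd.closure_inter_of_isOpen hU]

lemma isRC_embCl (hd : Dense X₀) (A : Clopens X₀) : IsRC (embCl X₀ A) := by
  obtain ⟨U, hU, hUA⟩ := isOpen_induced_iff.mp A.isClopen.isOpen
  rw [embCl_eq_closure hd hU (by rw [hUA, A.isClopen.isClosed.closure_eq])]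
  exact hU.isRC_closure

lemma embCl_sup (A B : Clopens X₀) : embCl X₀ (A ⊔ B) = embCl X₀ A ∪ embCl X₀ B := by
  simp only [embCl, Clopens.coe_sup, image_union, closure_union]

lemma embCl_bot : embCl X₀ (⊥ : Clopens X₀) = ∅ := by
  simp [embCl]

lemma embCl_top (hd : Dense X₀) : embCl X₀ (⊤ : Clopens X₀) = univ := by
  simpa [embCl] using hd.closure_eq

lemma embCl_mono {A B : Clopens X₀} (hAB : A ≤ B) : embCl X₀ A ⊆ embCl X₀ B :=
  closure_mono (image_mono hAB)

lemma exists_embCl_eq_of_isRC (hd : Dense X₀) (hed : ExtremallyDisconnected X₀) {F : Set X}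
    (hF : IsRC F) : ∃ A : Clopens X₀, embCl X₀ A = F := by
  have hS : IsOpen (Subtype.val ⁻¹' interior F : Set X₀) :=
    isOpen_interior.preimage continuous_subtype_val
  refine ⟨⟨closure _, isClosed_closure, hed.open_closure _ hS⟩, ?_⟩
  rw [embCl_eq_closure hd isOpen_interior rfl, ← hF]

lemma IsClanRC.isClan_preimage_embCl (hd : Dense X₀) {Γ : Set (Set X)} (hΓ : IsClanRC Γ) :
    IsClan (fun A B : Clopens X₀ => (embCl X₀ A ∩ embCl X₀ B).Nonempty)
      {A | embCl X₀ A ∈ Γ} := by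
  obtain ⟨-, ⟨F, hF⟩, hempty, hup, hsplit, hmeet⟩ := hΓ
  refine ⟨⟨⊤, ?_⟩, by simpa [embCl_bot] using hempty, ?_, ?_, ?_⟩
  · rw [mem_ofPred_eq, embCl_top hd]
    exact hup F hF univ isRC_univ (subset_univ F)
  · exact fun A hA B hAB => hup _ hA _ (isRC_embCl hd B) (embCl_mono hAB)
  · intro A B hAB
    rw [mem_ofPred_eq, embCl_sup] at hAB
    exact hsplit _ _ (isRC_embCl hd A) (isRC_embCl hd B) hAB
  · exact fun A hA B hB => Or.inl (hmeet _ hA _ hB)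

end EmbCl

lemma TwoContact.semiregular {X : Type*} [TopologicalSpace X] {X₀ : Set X}
    (h : TwoContact X X₀) : Semiregular X := fun U hU x hx => by
  obtain ⟨A, hxA, hAU⟩ := h.base U hU x hx
  exact ⟨embCl X₀ A, isRC_embCl h.dense A, hxA, hAU⟩

theorem stmt13 {X : Type*} [TopologicalSpace X] {X₀ : Set X}
    (h : TwoContact X X₀) (hed : ExtremallyDisconnected ↥X₀) :
    CSemiregular X := by
  refine ⟨h.semiregular, h.t0, fun Γ hΓ => ?_⟩
  obtain ⟨x, hx⟩ := h.cs4 _ (hΓ.isClan_preimage_embCl h.dense)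
  have hmem (A : Clopens X₀) : embCl X₀ A ∈ Γ ↔ x ∈ embCl X₀ A := Set.ext_iff.mp hx A
  refine ⟨x, Set.ext fun F => ⟨fun hF => ?_, fun ⟨hF, hxF⟩ => ?_⟩⟩
  · obtain ⟨A, rfl⟩ := exists_embCl_eq_of_isRC h.dense hed (hΓ.1 F hF)
    exact ⟨isRC_embCl h.dense A, (hmem A).1 hF⟩
  · obtain ⟨A, rfl⟩ := exists_embCl_eq_of_isRC h.dense hed hF
    exact (hmem A).2 hxF
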